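/- For every integer n ≥ 2, v(n) ≤ 2(n − M(n) + 1). -/

import Mathlib

open Filter MeasureTheory

noncomputable section

/-- The set `G_n = {(a,b) : 1 ≤ a,b ≤ n-1, ab ≡ 1 (mod n)}` as a set of points in `ℝ²`. -/
def modPoints (n : ℕ) : Set (ℝ × ℝ) :=
  {p | ∃ a b : ℤ, 1 ≤ a ∧ a ≤ (n : ℤ) - 1 ∧ 1 ≤ b ∧ b ≤ (n : ℤ) - 1 ∧
    (n : ℤ) ∣ a * b - 1 ∧ p = ((a : ℝ), (b : ℝ))}

/-- The convex closure `C_n` of `G_n`. -/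
def modHull (n : ℕ) : Set (ℝ × ℝ) := convexHull ℝ (modPoints n)

/-- The set of vertices (extreme points) of `C_n`. -/
def modVertices (n : ℕ) : Set (ℝ × ℝ) := Set.extremePoints ℝ (modHull n)

/-- `v(n)`, the number of vertices of `C_n`. -/
def numVertices (n : ℕ) : ℕ := (modVertices n).ncard

/-- `M(n) = max{|a-b| : 1 ≤ a,b ≤ n-1, ab ≡ 1 (mod n)}`. -/
def Mgap (n : ℕ) : ℕ :=
  sSup {m : ℕ | ∃ a b : ℤ, 1 ≤ a ∧ a ≤ (n : ℤ) - 1 ∧ 1 ≤ b ∧ b ≤ (n : ℤ) - 1 ∧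
    (n : ℤ) ∣ a * b - 1 ∧ m = (a - b).natAbs}

/-!
Choose `(a₀, b₀) ∈ G_n` with `M(n) = a₀ - b₀` and `a₀ + b₀ ≤ n`, which the symmetries
`(a, b) ↦ (b, a)` and `(a, b) ↦ (n - a, n - b)` of `G_n` allow. If `M(n) > 0`, a point `(a, b)`
of `G_n` with `b₀ < a, b < n - b₀` has `|a - b| ≤ M(n)`, so it lies in the convex hull of the
hexagon `(1, 1), (a₀, b₀), (b₀, a₀), (n - a₀, n - b₀), (n - b₀, n - a₀), (n - 1, n - 1)` of
points of `G_n` without being one of its corners, and is therefore not a vertex of `C_n`. Hence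
every vertex has a coordinate in a set `R` of `2 b₀` values near `0` or `n`. As each coordinate
of a point of `G_n` determines the other, there are at most `2 |R| ≤ 4 b₀ ≤ 2 (n - M(n) + 1)`
vertices. If `M(n) = 0`, taking `R = {1, …, n - 1}` gives `v(n) ≤ 2 (n - 1)`.
-/

section ConvexHull

variable {𝕜 E : Type*} [Field 𝕜] [LinearOrder 𝕜] [IsStrictOrderedRing 𝕜]
  [AddCommGroup E] [Module 𝕜 E]

theorem mem_convexHull_of_sum_smul_eq {ι : Type*} {s : Set E} (t : Finset ι) {w : ι → 𝕜}
    {z : ι → E} {q : E} (hw₀ : ∀ i ∈ t, 0 ≤ w i) (hw : 0 < ∑ i ∈ t, w i)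
    (hz : ∀ i ∈ t, z i ∈ s) (hq : (∑ i ∈ t, w i) • q = ∑ i ∈ t, w i • z i) :
    q ∈ convexHull 𝕜 s := by
  have := t.centerMass_mem_convexHull hw₀ hw hz
  rwa [Finset.centerMass, ← hq, smul_smul, inv_mul_cancel₀ hw.ne', one_smul] at this

theorem add_smul_add_smul_mem_convexHull_triangle (O e f : E) {α β x y : 𝕜} (hβ : 0 ≤ β)
    (hβα : β < α) (hx : β ≤ x) (hy : β ≤ y) (hxy : x + y ≤ α + β) :
    O + x • e + y • f ∈ convexHull 𝕜 {O, O + α • e + β • f, O + β • e + α • f} := by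
  refine mem_convexHull_of_sum_smul_eq Finset.univ
    (w := ![(α - β) * (α + β - x - y), x * α - y * β, y * α - x * β])
    (z := ![O, O + α • e + β • f, O + β • e + α • f]) ?_ ?_ ?_ ?_
  · intro i _
    fin_cases i <;> simp <;> nlinarith
  · simp [Fin.sum_univ_three]
    nlinarith
  · intro i _
    fin_cases i <;> simp
  · simp [Fin.sum_univ_three]
    module

theorem add_smul_add_smul_mem_convexHull_parallelogram (P e f : E) {m l x y : 𝕜} (hm : 0 < m)
    (hl : 0 < l) (hx₀ : 0 ≤ x) (hxm : x ≤ m) (hy₀ : 0 ≤ y) (hyl : y ≤ l) :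
    P + x • e + y • f ∈ convexHull 𝕜 {P, P + m • e, P + l • f, P + m • e + l • f} := by
  refine mem_convexHull_of_sum_smul_eq Finset.univ
    (w := ![(m - x) * (l - y), x * (l - y), (m - x) * y, x * y])
    (z := ![P, P + m • e, P + l • f, P + m • e + l • f]) ?_ ?_ ?_ ?_
  · intro i _
    fin_cases i <;> simp <;> nlinarith
  · simp [Fin.sum_univ_four]
    nlinarith
  · intro i _
    fin_cases i <;> simp
  · simp [Fin.sum_univ_four]
    module

theorem mem_of_mem_convexHull_of_mem_extremePoints {s t : Set E} {q : E} (hst : s ⊆ t)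
    (hq : q ∈ convexHull 𝕜 s) (hext : q ∈ (convexHull 𝕜 t).extremePoints 𝕜) : q ∈ s :=
  extremePoints_convexHull_subset <|
    inter_extremePoints_subset_extremePoints_of_subset (convexHull_mono hst) ⟨hq, hext⟩

end ConvexHull

def gapHexagon (n a₀ b₀ : ℝ) : Set (ℝ × ℝ) :=
  {(1, 1), (a₀, b₀), (b₀, a₀), (n - a₀, n - b₀), (n - b₀, n - a₀), (n - 1, n - 1)}

theorem mem_convexHull_gapHexagon {n a₀ b₀ a b : ℝ} (hb₀ : 1 ≤ b₀) (hba₀ : b₀ < a₀)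
    (ha : b₀ ≤ a) (ha' : a ≤ n - b₀) (hb : b₀ ≤ b) (hb' : b ≤ n - b₀)
    (hab : a - b ≤ a₀ - b₀) (hba : b - a ≤ a₀ - b₀) :
    (a, b) ∈ convexHull ℝ (gapHexagon n a₀ b₀) := by
  rcases le_or_gt (a + b) (a₀ + b₀) with hlow | hlow
  · refine convexHull_mono (s := {(1, 1), (a₀, b₀), (b₀, a₀)})
      (by simp [gapHexagon, Set.insert_subset_iff]) ?_
    convert add_smul_add_smul_mem_convexHull_triangle ((1 : ℝ), (1 : ℝ)) (1, 0) (0, 1)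
      (α := a₀ - 1) (β := b₀ - 1) (x := a - 1) (y := b - 1)
      (by linarith) (by linarith) (by linarith) (by linarith) (by linarith) using 4
    all_goals simp
  rcases le_or_gt (2 * n - a₀ - b₀) (a + b) with hhigh | hhigh
  · refine convexHull_mono (s := {(n - 1, n - 1), (n - a₀, n - b₀), (n - b₀, n - a₀)})
      (by simp [gapHexagon, Set.insert_subset_iff]) ?_
    convert add_smul_add_smul_mem_convexHull_triangle ((n - 1 : ℝ), (n - 1 : ℝ)) (-1, 0) (0, -1)
      (α := a₀ - 1) (β := b₀ - 1) (x := n - 1 - a) (y := n - 1 - b)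
      (by linarith) (by linarith) (by linarith) (by linarith) (by linarith) using 4
    all_goals simp
  · refine convexHull_mono (s := {(b₀, a₀), (a₀, b₀), (n - a₀, n - b₀), (n - b₀, n - a₀)})
      (by simp [gapHexagon, Set.insert_subset_iff]) ?_
    convert add_smul_add_smul_mem_convexHull_parallelogram (b₀, a₀) (1, -1) (1, 1)
      (m := a₀ - b₀) (l := n - a₀ - b₀) (x := (a - b + a₀ - b₀) / 2)
      (y := (a + b - a₀ - b₀) / 2) (by linarith) (by linarith) (by linarith) (by linarith)
      (by linarith) (by linarith) using 6
    all_goals simp [Prod.ext_iff] <;> ring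

def IsInvPair (n : ℕ) (a b : ℤ) : Prop :=
  1 ≤ a ∧ a ≤ (n : ℤ) - 1 ∧ 1 ≤ b ∧ b ≤ (n : ℤ) - 1 ∧ (n : ℤ) ∣ a * b - 1

namespace IsInvPair

variable {n : ℕ} {a b : ℤ}

theorem one (hn : 2 ≤ n) : IsInvPair n 1 1 := ⟨le_rfl, by omega, le_rfl, by omega, by simp⟩

theorem swap (h : IsInvPair n a b) : IsInvPair n b a := by
  obtain ⟨h₁, h₂, h₃, h₄, h₅⟩ := h
  exact ⟨h₃, h₄, h₁, h₂, mul_comm a b ▸ h₅⟩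

theorem reflect (h : IsInvPair n a b) : IsInvPair n (n - a) (n - b) := by
  obtain ⟨h₁, h₂, h₃, h₄, h₅⟩ := h
  refine ⟨by omega, by omega, by omega, by omega, ?_⟩
  have : (n - a) * (n - b) - 1 = n * (n - a - b) + (a * b - 1) := by ring
  rw [this]
  exact dvd_add (dvd_mul_right _ _) h₅

theorem left_unique {a' : ℤ} (h : IsInvPair n a b) (h' : IsInvPair n a' b) : a = a' := by
  obtain ⟨h₁, h₂, -, -, h₅⟩ := h
  obtain ⟨h₁', h₂', -, -, h₅'⟩ := h'
  have hdvd : (n : ℤ) ∣ a' - a := by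
    have : a' - a = a * (a' * b - 1) - a' * (a * b - 1) := by ring
    rw [this]
    exact dvd_sub (h₅'.mul_left a) (h₅.mul_left a')
  have := Int.eq_zero_of_abs_lt_dvd hdvd (abs_sub_lt_iff.2 ⟨by omega, by omega⟩)
  omega

theorem right_unique {b' : ℤ} (h : IsInvPair n a b) (h' : IsInvPair n a b') : b = b' :=
  h.swap.left_unique h'.swap

end IsInvPair

section Counting

variable {n : ℕ}

theorem mem_modPoints {p : ℝ × ℝ} :
    p ∈ modPoints n ↔ ∃ a b : ℤ, IsInvPair n a b ∧ p = ((a : ℝ), (b : ℝ)) := by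
  simp [modPoints, IsInvPair, and_assoc]

theorem IsInvPair.mem_modPoints {a b : ℤ} (h : IsInvPair n a b) :
    ((a : ℝ), (b : ℝ)) ∈ modPoints n :=
  _root_.mem_modPoints.2 ⟨a, b, h, rfl⟩

theorem modPoints_injOn_fst : (modPoints n).InjOn Prod.fst := by
  intro p hp q hq hpq
  obtain ⟨a, b, h, rfl⟩ := mem_modPoints.1 hp
  obtain ⟨a', b', h', rfl⟩ := mem_modPoints.1 hq
  obtain rfl : a = a' := by simpa using hpq
  rw [h.right_unique h']

theorem modPoints_injOn_snd : (modPoints n).InjOn Prod.snd := by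
  intro p hp q hq hpq
  obtain ⟨a, b, h, rfl⟩ := mem_modPoints.1 hp
  obtain ⟨a', b', h', rfl⟩ := mem_modPoints.1 hq
  obtain rfl : b = b' := by simpa using hpq
  rw [h.left_unique h']

theorem modPoints_finite : (modPoints n).Finite := by
  refine (((Set.finite_Icc (1 : ℤ) (n - 1)).prod (Set.finite_Icc (1 : ℤ) (n - 1))).image
    fun p : ℤ × ℤ => ((p.1 : ℝ), (p.2 : ℝ))).subset ?_
  intro p hp
  obtain ⟨a, b, ⟨h₁, h₂, h₃, h₄, -⟩, rfl⟩ := mem_modPoints.1 hp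
  exact ⟨(a, b), ⟨⟨h₁, h₂⟩, ⟨h₃, h₄⟩⟩, rfl⟩

theorem IsInvPair.gapHexagon_subset_modPoints {a₀ b₀ : ℤ} (h₀ : IsInvPair n a₀ b₀) :
    gapHexagon n a₀ b₀ ⊆ modPoints n := by
  have hone : IsInvPair n 1 1 := IsInvPair.one (by have := h₀.1; have := h₀.2.1; omega)
  intro p hp
  simp only [gapHexagon, Set.mem_insert_iff, Set.mem_singleton_iff] at hp
  rcases hp with rfl | rfl | rfl | rfl | rfl | rfl
  · exact_mod_cast hone.mem_modPoints
  · exact h₀.mem_modPoints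
  · exact h₀.swap.mem_modPoints
  · exact_mod_cast h₀.reflect.mem_modPoints
  · exact_mod_cast h₀.reflect.swap.mem_modPoints
  · exact_mod_cast hone.reflect.mem_modPoints

theorem gaps_bddAbove : BddAbove {m : ℕ | ∃ a b : ℤ, 1 ≤ a ∧ a ≤ (n : ℤ) - 1 ∧ 1 ≤ b ∧
    b ≤ (n : ℤ) - 1 ∧ (n : ℤ) ∣ a * b - 1 ∧ m = (a - b).natAbs} :=
  ⟨n, by rintro _ ⟨a, b, h₁, h₂, h₃, h₄, -, rfl⟩; omega⟩

theorem IsInvPair.natAbs_sub_le_Mgap {a b : ℤ} (h : IsInvPair n a b) :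
    (a - b).natAbs ≤ Mgap n :=
  le_csSup gaps_bddAbove ⟨a, b, h.1, h.2.1, h.2.2.1, h.2.2.2.1, h.2.2.2.2, rfl⟩

theorem exists_isInvPair_natAbs_sub_eq_Mgap (hM : Mgap n ≠ 0) :
    ∃ a b : ℤ, IsInvPair n a b ∧ (a - b).natAbs = Mgap n := by
  obtain ⟨a, b, h₁, h₂, h₃, h₄, h₅, hab⟩ := Nat.sSup_mem
    (Set.nonempty_iff_ne_empty.2 fun hempty => hM (by rw [Mgap, hempty, csSup_empty]; rfl))
    (gaps_bddAbove (n := n))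
  exact ⟨a, b, ⟨h₁, h₂, h₃, h₄, h₅⟩, hab.symm⟩

theorem exists_isInvPair_sub_eq_Mgap (hM : Mgap n ≠ 0) :
    ∃ a₀ b₀ : ℤ, IsInvPair n a₀ b₀ ∧ a₀ + b₀ ≤ n ∧ a₀ - b₀ = Mgap n := by
  obtain ⟨a, b, h, hab⟩ := exists_isInvPair_natAbs_sub_eq_Mgap hM
  have ⟨h₁, h₂, h₃, h₄, _⟩ := h
  rcases le_total b a with hba | hab'
  · rcases le_total (a + b) n with hs | hs
    · exact ⟨a, b, h, hs, by omega⟩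
    · exact ⟨n - b, n - a, h.reflect.swap, by omega, by omega⟩
  · rcases le_total (a + b) n with hs | hs
    · exact ⟨b, a, h.swap, by omega, by omega⟩
    · exact ⟨n - a, n - b, h.reflect, by omega, by omega⟩

theorem IsInvPair.min_le_or_le_max_of_mem_modVertices {a₀ b₀ a b : ℤ} (h₀ : IsInvPair n a₀ b₀)
    (hgap : a₀ - b₀ = Mgap n) (hM : Mgap n ≠ 0) (h : IsInvPair n a b)
    (hv : ((a : ℝ), (b : ℝ)) ∈ modVertices n) : min a b ≤ b₀ ∨ n - b₀ ≤ max a b := by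
  by_contra! hfar
  have hab := h.natAbs_sub_le_Mgap
  have hb₀ := h₀.2.2.1
  have hhull : ((a : ℝ), (b : ℝ)) ∈ convexHull ℝ (gapHexagon n a₀ b₀) := by
    apply mem_convexHull_gapHexagon <;> norm_cast <;> omega
  have := mem_of_mem_convexHull_of_mem_extremePoints h₀.gapHexagon_subset_modPoints hhull hv
  simp only [gapHexagon, Set.mem_insert_iff, Set.mem_singleton_iff, Prod.mk.injEq] at this
  norm_cast at this
  rw [Int.subNatNat_eq_coe] at this
  omega

theorem numVertices_le_two_mul_card (R : Finset ℤ)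
    (hR : ∀ a b : ℤ, IsInvPair n a b → ((a : ℝ), (b : ℝ)) ∈ modVertices n → a ∈ R ∨ b ∈ R) :
    numVertices n ≤ 2 * R.card := by
  set S : Set ℝ := (Int.cast : ℤ → ℝ) '' R
  have hS : S.ncard = R.card := by
    rw [Set.ncard_image_of_injective _ Int.cast_injective, Set.ncard_coe_finset]
  have hfst : (modPoints n ∩ Prod.fst ⁻¹' S).ncard ≤ S.ncard :=
    Set.ncard_le_ncard_of_injOn _ (fun _ hp => hp.2)
      (modPoints_injOn_fst.mono Set.inter_subset_left)
  have hsnd : (modPoints n ∩ Prod.snd ⁻¹' S).ncard ≤ S.ncard :=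
    Set.ncard_le_ncard_of_injOn _ (fun _ hp => hp.2)
      (modPoints_injOn_snd.mono Set.inter_subset_left)
  have hcover :
      modVertices n ⊆ (modPoints n ∩ Prod.fst ⁻¹' S) ∪ (modPoints n ∩ Prod.snd ⁻¹' S) := by
    intro p hp
    have hp' : p ∈ modPoints n := extremePoints_convexHull_subset hp
    obtain ⟨a, b, h, rfl⟩ := mem_modPoints.1 hp'
    rcases hR a b h hp with ha | hb
    · exact Or.inl ⟨hp', a, ha, rfl⟩
    · exact Or.inr ⟨hp', b, hb, rfl⟩
  have hfinite := modPoints_finite (n := n)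
  calc numVertices n
      ≤ ((modPoints n ∩ Prod.fst ⁻¹' S) ∪ (modPoints n ∩ Prod.snd ⁻¹' S)).ncard :=
        Set.ncard_le_ncard hcover
          ((hfinite.subset Set.inter_subset_left).union (hfinite.subset Set.inter_subset_left))
    _ ≤ (modPoints n ∩ Prod.fst ⁻¹' S).ncard + (modPoints n ∩ Prod.snd ⁻¹' S).ncard :=
        Set.ncard_union_le _ _
    _ ≤ 2 * R.card := by omega

theorem numVertices_le_two_mul_sub_one : numVertices n ≤ 2 * (n - 1) := by
  have := numVertices_le_two_mul_card (Finset.Icc 1 ((n : ℤ) - 1))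
    fun a b h _ => Or.inl (Finset.mem_Icc.2 ⟨h.1, h.2.1⟩)
  rw [Int.card_Icc] at this
  omega

theorem IsInvPair.numVertices_le_four_mul {a₀ b₀ : ℤ} (h₀ : IsInvPair n a₀ b₀)
    (hgap : a₀ - b₀ = Mgap n) (hM : Mgap n ≠ 0) : numVertices n ≤ 4 * b₀.toNat := by
  have := numVertices_le_two_mul_card (Finset.Icc 1 b₀ ∪ Finset.Icc ((n : ℤ) - b₀) (n - 1))
    fun a b h hv => by
      have := h₀.min_le_or_le_max_of_mem_modVertices hgap hM h hv
      obtain ⟨ha, ha', hb, hb', -⟩ := h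
      simp only [Finset.mem_union, Finset.mem_Icc]
      omega
  have := Finset.card_union_le (Finset.Icc 1 b₀) (Finset.Icc ((n : ℤ) - b₀) (n - 1))
  rw [Int.card_Icc, Int.card_Icc] at this
  omega

end Counting

theorem stmt15_general (n : ℕ) :
    (numVertices n : ℤ) ≤ 2 * ((n : ℤ) - (Mgap n : ℤ) + 1) := by
  by_cases hM : Mgap n = 0
  · have := numVertices_le_two_mul_sub_one (n := n)
    omega
  · obtain ⟨a₀, b₀, h₀, hsum, hgap⟩ := exists_isInvPair_sub_eq_Mgap hM
    have := h₀.numVertices_le_four_mul hgap hM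
    have := h₀.2.2.1
    omega

theorem stmt15 (n : ℕ) (hn : 2 ≤ n) :
    (numVertices n : ℤ) ≤ 2 * ((n : ℤ) - (Mgap n : ℤ) + 1) :=
  stmt15_general n
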